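/- arXiv:1305.1572 — 2 statements merged into one kernel-verified Lean document; each statement's English description precedes it below -/
import Mathlib

section
/- Let λ ∈ (0,1), C₋, C₊ ∈ ℝ, S₀ ∈ ℝ and M > 0, and let f₋, f₊ : ℝ → ℝ be bounded continuous functions with |f₋(s) − C₋| ≤ M e^{−λs} and |f₊(s) − C₊| ≤ M e^{−λs} for all s ≥ S₀. Then the Poisson extension f of (f₋, f₊) satisfies: there is M′ > 0 such that |f(s,t) − (C₋ + (C₊ − C₋) t)| ≤ M′ e^{−λs} for all s ≥ S₀ + 1 and all t ∈ (0,1). -/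
open Real MeasureTheory

/-- The Poisson kernel of the unit strip `{s + it : 0 < t < 1}`. -/
noncomputable def stripPoissonKernel (s t : ℝ) : ℝ :=
  Real.sin (π * t) / (Real.cosh s - Real.cos (π * t))

/-- The Poisson extension to the strip of a pair of boundary functions `f₋, f₊ : ℝ → ℝ`. -/
noncomputable def poissonExt (fm fp : ℝ → ℝ) (s t : ℝ) : ℝ :=
  (1 / (2 * π)) *
    ∫ σ : ℝ, (stripPoissonKernel (σ - s) t * fm σ + stripPoissonKernel (σ - s) (1 - t) * fp σ)

/-!
The kernel `P(·, t)` has total mass `2π(1 - t)` (it is the derivative of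
`2 arctan ((eˣ - cos πt) / sin πt)`), so the affine function `C₋ + (C₊ - C₋) t` is the
Poisson extension of the constant data, and by linearity it suffices to bound the extension
of data `g` with `|g σ| ≤ B e^{-λσ}` on all of `ℝ` (boundedness takes care of `σ < S₀`).
Translating, `∫ P(σ - s, t) e^{-λσ} dσ = e^{-λs} ∫ P(u, t) e^{-λu} du`, and the last
integral is bounded uniformly in `t`: for `|u| ≥ 3` one has `P(u, t) ≤ 4 e^{-|u|}`
independently of `t`, which beats `e^{-λu}` since `λ < 1`, while for `|u| ≤ 3` the weight
is at most `e^{3λ}` against the mass `2π(1 - t)`.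
-/

open Set Filter Topology Asymptotics

lemma integrable_exp_neg_mul_abs {a : ℝ} (ha : 0 < a) :
    Integrable fun x : ℝ => exp (-a * |x|) := by
  refine (Continuous.locallyIntegrable (by fun_prop))
    |>.integrable_of_isBigO_atTop_of_norm_isNegInvariant (g := fun x => exp (-a * x))
    (ae_of_all _ fun x => by simp) ?_
    ⟨Ioi 0, Ioi_mem_atTop 0, exp_neg_integrableOn_Ioi 0 ha⟩
  refine EventuallyEq.isBigO ?_
  filter_upwards [eventually_ge_atTop 0] with x hx
  rw [abs_of_nonneg hx]

section Kernel

variable {t : ℝ}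

lemma sin_pi_mul_pos (ht0 : 0 < t) (ht1 : t < 1) : 0 < sin (π * t) :=
  sin_pos_of_pos_of_lt_pi (by positivity) (by nlinarith [pi_pos])

lemma cos_pi_mul_lt_one (ht0 : 0 < t) (ht1 : t < 1) : cos (π * t) < 1 := by
  nlinarith [sin_pi_mul_pos ht0 ht1, sin_sq_add_cos_sq (π * t), cos_le_one (π * t)]

lemma cos_pi_mul_lt_cosh (ht0 : 0 < t) (ht1 : t < 1) (u : ℝ) : cos (π * t) < cosh u :=
  (cos_pi_mul_lt_one ht0 ht1).trans_le (one_le_cosh u)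

lemma stripPoissonKernel_nonneg (ht0 : 0 < t) (ht1 : t < 1) (u : ℝ) :
    0 ≤ stripPoissonKernel u t :=
  div_nonneg (sin_pi_mul_pos ht0 ht1).le (sub_pos.2 (cos_pi_mul_lt_cosh ht0 ht1 u)).le

lemma continuous_stripPoissonKernel (ht0 : 0 < t) (ht1 : t < 1) :
    Continuous fun u => stripPoissonKernel u t :=
  continuous_const.div (continuous_cosh.sub continuous_const)
    fun u => (sub_pos.2 (cos_pi_mul_lt_cosh ht0 ht1 u)).ne'

lemma stripPoissonKernel_neg (u t : ℝ) : stripPoissonKernel (-u) t = stripPoissonKernel u t := by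
  simp only [stripPoissonKernel, cosh_neg]

lemma stripPoissonKernel_le_of_three_le_abs {u : ℝ} (hu : 3 ≤ |u|) :
    stripPoissonKernel u t ≤ 4 * exp (-|u|) := by
  have hexp : 4 ≤ exp |u| := by linarith [add_one_le_exp |u|]
  have hcosh : exp |u| / 2 ≤ cosh u := by
    rw [← cosh_abs, cosh_eq]
    linarith [exp_pos (-|u|)]
  have hD : exp |u| / 4 ≤ cosh u - cos (π * t) := by linarith [cos_le_one (π * t)]
  have hD0 : 0 < exp |u| / 4 := by positivity
  calc stripPoissonKernel u t ≤ 1 / (cosh u - cos (π * t)) :=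
        div_le_div_of_nonneg_right (sin_le_one _) (hD0.trans_le hD).le
    _ ≤ 1 / (exp |u| / 4) := one_div_le_one_div_of_le hD0 hD
    _ = 4 * exp (-|u|) := by rw [exp_neg]; field_simp

lemma integrable_stripPoissonKernel (ht0 : 0 < t) (ht1 : t < 1) :
    Integrable fun u => stripPoissonKernel u t := by
  refine (continuous_stripPoissonKernel ht0 ht1).locallyIntegrable
    |>.integrable_of_isBigO_atTop_of_norm_isNegInvariant (g := fun u => exp (-1 * u))
    (ae_of_all _ fun u => by simp [stripPoissonKernel_neg]) ?_
    ⟨Ioi 0, Ioi_mem_atTop 0, exp_neg_integrableOn_Ioi 0 one_pos⟩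
  refine IsBigO.of_bound 4 ?_
  filter_upwards [eventually_ge_atTop 3] with u hu
  have hu' : |u| = u := abs_of_nonneg (by linarith)
  have h := stripPoissonKernel_le_of_three_le_abs (t := t) (hu'.symm ▸ hu)
  rw [hu'] at h
  rwa [norm_of_nonneg (stripPoissonKernel_nonneg ht0 ht1 u), norm_of_nonneg (exp_pos _).le,
    neg_one_mul]

lemma hasDerivAt_two_mul_arctan (ht0 : 0 < t) (ht1 : t < 1) (x : ℝ) :
    HasDerivAt (fun x => 2 * arctan ((exp x - cos (π * t)) / sin (π * t)))
      (stripPoissonKernel x t) x := by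
  have hsin := sin_pi_mul_pos ht0 ht1
  refine ((((hasDerivAt_exp x).sub_const (cos (π * t))).div_const (sin (π * t))).arctan
    |>.const_mul 2).congr_deriv ?_
  have hq : 0 < exp x ^ 2 + 1 - 2 * exp x * cos (π * t) := by
    nlinarith [sq_nonneg (exp x - cos (π * t)), sin_sq_add_cos_sq (π * t)]
  rw [stripPoissonKernel, cosh_eq, exp_neg]
  field_simp
  linear_combination -sin_sq_add_cos_sq (π * t)

lemma integral_stripPoissonKernel (ht0 : 0 < t) (ht1 : t < 1) :
    ∫ u, stripPoissonKernel u t = 2 * π * (1 - t) := by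
  have hsin := sin_pi_mul_pos ht0 ht1
  have hcot : arctan (cos (π * t) / sin (π * t)) = π / 2 - π * t := by
    rw [← inv_div, ← tan_eq_sin_div_cos, ← tan_pi_div_two_sub,
      arctan_tan (by nlinarith [pi_pos]) (by nlinarith [pi_pos])]
  have hbot : Tendsto (fun x => 2 * arctan ((exp x - cos (π * t)) / sin (π * t))) atBot
      (𝓝 (2 * arctan ((0 - cos (π * t)) / sin (π * t)))) :=
    ((continuous_arctan.tendsto _).comp
      ((tendsto_exp_atBot.sub_const _).div_const _)).const_mul 2
  have htop : Tendsto (fun x => 2 * arctan ((exp x - cos (π * t)) / sin (π * t))) atTop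
      (𝓝 (2 * (π / 2))) :=
    ((tendsto_arctan_atTop.mono_right nhdsWithin_le_nhds).comp
      ((tendsto_atTop_add_const_right _ _ tendsto_exp_atTop).atTop_div_const hsin)).const_mul 2
  rw [integral_of_hasDerivAt_of_tendsto (hasDerivAt_two_mul_arctan ht0 ht1)
    (integrable_stripPoissonKernel ht0 ht1) hbot htop, zero_sub, neg_div, arctan_neg, hcot]
  ring

end Kernel

section Weighted

variable {t lam : ℝ}

lemma stripPoissonKernel_mul_exp_le (hlam : 0 ≤ lam) (ht0 : 0 < t) (ht1 : t < 1) (u : ℝ) :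
    stripPoissonKernel u t * exp (-lam * u) ≤
      exp (3 * lam) * stripPoissonKernel u t + 4 * exp (-(1 - lam) * |u|) := by
  have hP := stripPoissonKernel_nonneg ht0 ht1 u
  have hlu : -lam * u ≤ lam * |u| := by nlinarith [neg_abs_le u]
  rcases le_or_gt |u| 3 with hu | hu
  · have h : exp (-lam * u) ≤ exp (3 * lam) := exp_le_exp.2 (by nlinarith)
    nlinarith [exp_pos (-(1 - lam) * |u|)]
  · have h : exp (-|u|) * exp (-lam * u) ≤ exp (-(1 - lam) * |u|) := by
      rw [← exp_add]
      exact exp_le_exp.2 (by linarith)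
    nlinarith [stripPoissonKernel_le_of_three_le_abs (t := t) hu.le, exp_pos (-lam * u),
      exp_pos (3 * lam)]

lemma integrable_stripPoissonKernel_mul_exp (hlam0 : 0 ≤ lam) (hlam1 : lam < 1)
    (ht0 : 0 < t) (ht1 : t < 1) :
    Integrable fun u => stripPoissonKernel u t * exp (-lam * u) := by
  refine Integrable.mono'
    (g := fun u => exp (3 * lam) * stripPoissonKernel u t + 4 * exp (-(1 - lam) * |u|))
    (((integrable_stripPoissonKernel ht0 ht1).const_mul _).add
      ((integrable_exp_neg_mul_abs (sub_pos.2 hlam1)).const_mul 4))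
    (((continuous_stripPoissonKernel ht0 ht1).mul (by fun_prop)).aestronglyMeasurable)
    (ae_of_all _ fun u => ?_)
  rw [norm_of_nonneg (mul_nonneg (stripPoissonKernel_nonneg ht0 ht1 u) (exp_pos _).le)]
  exact stripPoissonKernel_mul_exp_le hlam0 ht0 ht1 u

lemma exists_integral_stripPoissonKernel_mul_exp_le (hlam0 : 0 ≤ lam) (hlam1 : lam < 1) :
    ∃ A > 0, ∀ τ, 0 < τ → τ < 1 →
      ∫ u, stripPoissonKernel u τ * exp (-lam * u) ≤ A := by
  have hJ := integrable_exp_neg_mul_abs (sub_pos.2 hlam1)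
  have hJ0 : 0 ≤ ∫ x, exp (-(1 - lam) * |x|) := integral_nonneg fun x => (exp_pos _).le
  refine ⟨2 * π * exp (3 * lam) + 4 * ∫ x, exp (-(1 - lam) * |x|), by positivity,
    fun τ hτ0 hτ1 => ?_⟩
  have hP := integrable_stripPoissonKernel hτ0 hτ1
  calc ∫ u, stripPoissonKernel u τ * exp (-lam * u)
      ≤ ∫ u, (exp (3 * lam) * stripPoissonKernel u τ + 4 * exp (-(1 - lam) * |u|)) :=
        integral_mono (integrable_stripPoissonKernel_mul_exp hlam0 hlam1 hτ0 hτ1)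
          ((hP.const_mul _).add (hJ.const_mul 4)) (stripPoissonKernel_mul_exp_le hlam0 hτ0 hτ1)
    _ = exp (3 * lam) * (2 * π * (1 - τ)) + 4 * ∫ x, exp (-(1 - lam) * |x|) := by
        rw [integral_add (hP.const_mul _) (hJ.const_mul 4), integral_const_mul,
          integral_const_mul, integral_stripPoissonKernel hτ0 hτ1]
    _ ≤ 2 * π * exp (3 * lam) + 4 * ∫ x, exp (-(1 - lam) * |x|) := by
        nlinarith [mul_pos (mul_pos (exp_pos (3 * lam)) pi_pos) hτ0]

lemma stripPoissonKernel_sub_mul_exp_eq (s σ t lam : ℝ) :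
    stripPoissonKernel (σ - s) t * exp (-lam * σ) =
      exp (-lam * s) * (stripPoissonKernel (σ - s) t * exp (-lam * (σ - s))) := by
  rw [mul_left_comm, ← exp_add]
  ring_nf

end Weighted

section Extension

variable {t : ℝ}

lemma integrable_stripPoissonKernel_sub_mul {g : ℝ → ℝ} (hg : Continuous g)
    (hgb : ∃ K, ∀ σ, |g σ| ≤ K) (ht0 : 0 < t) (ht1 : t < 1) (s : ℝ) :
    Integrable fun σ => stripPoissonKernel (σ - s) t * g σ := by
  obtain ⟨K, hK⟩ := hgb
  exact ((integrable_stripPoissonKernel ht0 ht1).comp_sub_right s).mul_bdd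
    hg.aestronglyMeasurable (ae_of_all _ hK)

lemma poissonExt_const (a b : ℝ) (ht0 : 0 < t) (ht1 : t < 1) (s : ℝ) :
    poissonExt (fun _ => a) (fun _ => b) s t = a + (b - a) * t := by
  have ht0' : 0 < 1 - t := by linarith
  have ht1' : 1 - t < 1 := by linarith
  rw [poissonExt, integral_add
      (((integrable_stripPoissonKernel ht0 ht1).comp_sub_right s).mul_const a)
      (((integrable_stripPoissonKernel ht0' ht1').comp_sub_right s).mul_const b),
    integral_mul_const, integral_mul_const,
    integral_sub_right_eq_self (fun u => stripPoissonKernel u t),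
    integral_sub_right_eq_self (fun u => stripPoissonKernel u (1 - t)),
    integral_stripPoissonKernel ht0 ht1, integral_stripPoissonKernel ht0' ht1']
  field_simp
  ring

lemma poissonExt_sub_affine {fm fp : ℝ → ℝ} (hfm : Continuous fm) (hfp : Continuous fp)
    (hfmb : ∃ K, ∀ σ, |fm σ| ≤ K) (hfpb : ∃ K, ∀ σ, |fp σ| ≤ K) (Cm Cp : ℝ)
    (ht0 : 0 < t) (ht1 : t < 1) (s : ℝ) :
    poissonExt fm fp s t - (Cm + (Cp - Cm) * t) =
      poissonExt (fun σ => fm σ - Cm) (fun σ => fp σ - Cp) s t := by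
  have ht0' : 0 < 1 - t := by linarith
  have ht1' : 1 - t < 1 := by linarith
  have hconst : ∀ C : ℝ, ∃ K, ∀ _ : ℝ, |C| ≤ K := fun C => ⟨|C|, fun _ => le_rfl⟩
  have hf : Integrable fun σ =>
      stripPoissonKernel (σ - s) t * fm σ + stripPoissonKernel (σ - s) (1 - t) * fp σ :=
    (integrable_stripPoissonKernel_sub_mul hfm hfmb ht0 ht1 s).add
      (integrable_stripPoissonKernel_sub_mul hfp hfpb ht0' ht1' s)
  have hC : Integrable fun σ =>
      stripPoissonKernel (σ - s) t * Cm + stripPoissonKernel (σ - s) (1 - t) * Cp :=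
    (integrable_stripPoissonKernel_sub_mul continuous_const (hconst Cm) ht0 ht1 s).add
      (integrable_stripPoissonKernel_sub_mul continuous_const (hconst Cp) ht0' ht1' s)
  rw [← poissonExt_const Cm Cp ht0 ht1 s, poissonExt, poissonExt, ← mul_sub,
    ← integral_sub hf hC, poissonExt]
  congr 2 with σ
  ring

end Extension

lemma abs_poissonExt_le {gm gp : ℝ → ℝ} {lam A B t : ℝ}
    (hlam0 : 0 ≤ lam) (hlam1 : lam < 1)
    (hA : ∀ τ, 0 < τ → τ < 1 → ∫ u, stripPoissonKernel u τ * exp (-lam * u) ≤ A)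
    (hB : 0 ≤ B) (hgm : ∀ σ, |gm σ| ≤ B * exp (-lam * σ))
    (hgp : ∀ σ, |gp σ| ≤ B * exp (-lam * σ))
    (ht0 : 0 < t) (ht1 : t < 1) (s : ℝ) :
    |poissonExt gm gp s t| ≤ B * A / π * exp (-lam * s) := by
  have ht0' : 0 < 1 - t := by linarith
  have ht1' : 1 - t < 1 := by linarith
  have hW : ∀ τ, 0 < τ → τ < 1 →
      Integrable (fun σ => stripPoissonKernel (σ - s) τ * exp (-lam * σ)) ∧
      ∫ σ, stripPoissonKernel (σ - s) τ * exp (-lam * σ) =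
        exp (-lam * s) * ∫ u, stripPoissonKernel u τ * exp (-lam * u) := by
    intro τ hτ0 hτ1
    simp only [stripPoissonKernel_sub_mul_exp_eq s _ τ lam]
    refine ⟨((integrable_stripPoissonKernel_mul_exp hlam0 hlam1 hτ0 hτ1).comp_sub_right
      s).const_mul _, ?_⟩
    rw [integral_const_mul, integral_sub_right_eq_self
      (fun u => stripPoissonKernel u τ * exp (-lam * u))]
  obtain ⟨hW1, hI1⟩ := hW t ht0 ht1
  obtain ⟨hW2, hI2⟩ := hW (1 - t) ht0' ht1'
  have hpt : ∀ σ,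
      ‖stripPoissonKernel (σ - s) t * gm σ + stripPoissonKernel (σ - s) (1 - t) * gp σ‖ ≤
      B * (stripPoissonKernel (σ - s) t * exp (-lam * σ)) +
        B * (stripPoissonKernel (σ - s) (1 - t) * exp (-lam * σ)) := by
    intro σ
    have h1 := stripPoissonKernel_nonneg ht0 ht1 (σ - s)
    have h2 := stripPoissonKernel_nonneg ht0' ht1' (σ - s)
    calc _ ≤ |stripPoissonKernel (σ - s) t * gm σ| +
          |stripPoissonKernel (σ - s) (1 - t) * gp σ| := norm_add_le _ _
      _ = stripPoissonKernel (σ - s) t * |gm σ| +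
          stripPoissonKernel (σ - s) (1 - t) * |gp σ| := by
        rw [abs_mul, abs_mul, abs_of_nonneg h1, abs_of_nonneg h2]
      _ ≤ _ := by nlinarith [mul_le_mul_of_nonneg_left (hgm σ) h1,
          mul_le_mul_of_nonneg_left (hgp σ) h2]
  calc |poissonExt gm gp s t|
      = (2 * π)⁻¹ * ‖∫ σ, stripPoissonKernel (σ - s) t * gm σ +
          stripPoissonKernel (σ - s) (1 - t) * gp σ‖ := by
        rw [poissonExt, abs_mul, one_div, abs_of_pos (by positivity), Real.norm_eq_abs]
    _ ≤ (2 * π)⁻¹ * ∫ σ, (B * (stripPoissonKernel (σ - s) t * exp (-lam * σ)) +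
          B * (stripPoissonKernel (σ - s) (1 - t) * exp (-lam * σ))) := by
        gcongr
        exact norm_integral_le_of_norm_le ((hW1.const_mul B).add (hW2.const_mul B))
          (ae_of_all _ hpt)
    _ = (2 * π)⁻¹ * (B * ∫ u, stripPoissonKernel u t * exp (-lam * u)) * exp (-lam * s) +
          (2 * π)⁻¹ * (B * ∫ u, stripPoissonKernel u (1 - t) * exp (-lam * u)) *
            exp (-lam * s) := by
        rw [integral_add (hW1.const_mul B) (hW2.const_mul B), integral_const_mul,
          integral_const_mul, hI1, hI2]
        ring
    _ ≤ (2 * π)⁻¹ * (B * A) * exp (-lam * s) + (2 * π)⁻¹ * (B * A) * exp (-lam * s) := by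
        gcongr
        exacts [hA t ht0 ht1, hA (1 - t) ht0' ht1']
    _ = B * A / π * exp (-lam * s) := by
        field_simp
        ring

lemma exists_abs_sub_le_mul_exp {g : ℝ → ℝ} {lam C S₀ M : ℝ} (hlam : 0 ≤ lam)
    (hgb : ∃ K, ∀ σ, |g σ| ≤ K)
    (hg : ∀ σ, S₀ ≤ σ → |g σ - C| ≤ M * exp (-lam * σ)) :
    ∃ B > 0, ∀ σ, |g σ - C| ≤ B * exp (-lam * σ) := by
  obtain ⟨K, hK⟩ := hgb
  have hK0 : 0 ≤ K := (abs_nonneg _).trans (hK 0)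
  refine ⟨max M ((K + |C| + 1) * exp (lam * S₀)), lt_max_of_lt_right (by positivity),
    fun σ => ?_⟩
  rcases le_or_gt S₀ σ with hσ | hσ
  · exact (hg σ hσ).trans (by gcongr; exact le_max_left _ _)
  · calc |g σ - C| ≤ K + |C| + 1 := by linarith [abs_sub (g σ) C, hK σ]
      _ ≤ (K + |C| + 1) * (exp (lam * S₀) * exp (-lam * σ)) := by
        rw [← exp_add]
        exact le_mul_of_one_le_right (by positivity) (one_le_exp (by nlinarith))
      _ ≤ max M ((K + |C| + 1) * exp (lam * S₀)) * exp (-lam * σ) := by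
        rw [← mul_assoc]
        gcongr
        exact le_max_right _ _

theorem poissonExt_exp_convergence_general
    (lam Cm Cp S₀ M : ℝ) (hlam0 : 0 < lam) (hlam1 : lam < 1)
    (fm fp : ℝ → ℝ) (hfmc : Continuous fm) (hfpc : Continuous fp)
    (hfmb : ∃ K : ℝ, ∀ s : ℝ, |fm s| ≤ K) (hfpb : ∃ K : ℝ, ∀ s : ℝ, |fp s| ≤ K)
    (hdm : ∀ s : ℝ, S₀ ≤ s → |fm s - Cm| ≤ M * Real.exp (-lam * s))
    (hdp : ∀ s : ℝ, S₀ ≤ s → |fp s - Cp| ≤ M * Real.exp (-lam * s)) :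
    ∃ M' : ℝ, 0 < M' ∧ ∀ s t : ℝ, S₀ + 1 ≤ s → 0 < t → t < 1 →
      |poissonExt fm fp s t - (Cm + (Cp - Cm) * t)| ≤ M' * Real.exp (-lam * s) := by
  obtain ⟨Bm, hBm0, hBm⟩ := exists_abs_sub_le_mul_exp hlam0.le hfmb hdm
  obtain ⟨Bp, hBp0, hBp⟩ := exists_abs_sub_le_mul_exp hlam0.le hfpb hdp
  obtain ⟨A, hA0, hA⟩ := exists_integral_stripPoissonKernel_mul_exp_le hlam0.le hlam1
  refine ⟨(Bm + Bp) * A / π, by positivity, fun s t _ ht0 ht1 => ?_⟩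
  rw [poissonExt_sub_affine hfmc hfpc hfmb hfpb Cm Cp ht0 ht1 s]
  exact abs_poissonExt_le hlam0.le hlam1 hA (by positivity)
    (fun σ => (hBm σ).trans (by gcongr; linarith))
    (fun σ => (hBp σ).trans (by gcongr; linarith)) ht0 ht1 s

/-- If bounded continuous boundary data `f₋, f₊` converge exponentially (with rate `0 < λ < 1`)
to constants `C₋, C₊` as `s → +∞`, then the Poisson extension converges exponentially to the
affine function `C₋ + (C₊ − C₋) t` on the strip. -/
theorem poissonExt_exp_convergence
    (lam Cm Cp S₀ M : ℝ) (hlam0 : 0 < lam) (hlam1 : lam < 1) (hM : 0 < M)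
    (fm fp : ℝ → ℝ) (hfmc : Continuous fm) (hfpc : Continuous fp)
    (hfmb : ∃ K : ℝ, ∀ s : ℝ, |fm s| ≤ K) (hfpb : ∃ K : ℝ, ∀ s : ℝ, |fp s| ≤ K)
    (hdm : ∀ s : ℝ, S₀ ≤ s → |fm s - Cm| ≤ M * Real.exp (-lam * s))
    (hdp : ∀ s : ℝ, S₀ ≤ s → |fp s - Cp| ≤ M * Real.exp (-lam * s)) :
    ∃ M' : ℝ, 0 < M' ∧ ∀ s t : ℝ, S₀ + 1 ≤ s → 0 < t → t < 1 →
      |poissonExt fm fp s t - (Cm + (Cp - Cm) * t)| ≤ M' * Real.exp (-lam * s) :=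
  poissonExt_exp_convergence_general lam Cm Cp S₀ M hlam0 hlam1 fm fp hfmc hfpc hfmb hfpb hdm hdp
end

section
/- Let θ ∈ (0, π) and let ζ : S̄ → ℂ be continuous on the closed strip S̄, holomorphic on the open strip S, such that ζ(s + i·0) ∈ ℝ and ζ(s + i·1) ∈ ℝ·e^{iθ} for every s ∈ ℝ, and such that ζ(s + it) → 0, uniformly in t ∈ [0,1], as s → +∞ and as s → −∞. Then ζ is identically zero. -/
/-!
Put `h z = ζ z * exp (-θ z)`. The factor `exp (-θ z)` is real on `{t = 0}` and equal to
`e^{-θ s} e^{-iθ}` on `{t = 1}`, so `h` is real on both boundary lines, while `‖h‖` grows at most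
like `e^{θ|s|}` with `θ < π`, the critical rate for a strip of width one. Phragmén–Lindelöf applied
to `exp (± i h)`, whose modulus is `exp (∓ Im h)`, gives `Im h = 0` on the strip, so `h` is constant
by the open mapping theorem; since `ζ → 0` and `e^{-θ s} ≤ 1` as `s → +∞`, the constant is `0`.
-/

open Real Complex

/-- The open unit strip `{s + it : s ∈ ℝ, 0 < t < 1}` in `ℂ`. -/
def openStrip : Set ℂ := {z : ℂ | 0 < z.im ∧ z.im < 1}

/-- The closed unit strip `{s + it : s ∈ ℝ, 0 ≤ t ≤ 1}` in `ℂ`. -/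
def closedStrip : Set ℂ := {z : ℂ | 0 ≤ z.im ∧ z.im ≤ 1}

open Set Filter

lemma openStrip_eq : openStrip = im ⁻¹' Ioo 0 1 := rfl

lemma closedStrip_eq : closedStrip = im ⁻¹' Icc 0 1 := rfl

lemma isOpen_openStrip : IsOpen openStrip := isOpen_Ioo.preimage continuous_im

lemma isConnected_openStrip : IsConnected openStrip :=
  ⟨⟨I / 2, by simp [openStrip]; norm_num⟩,
    ((convex_Ioo (0 : ℝ) 1).linear_preimage imLm).isPreconnected⟩

lemma closure_openStrip : closure openStrip = closedStrip := by
  rw [openStrip_eq, closure_preimage_im, closure_Ioo zero_ne_one, closedStrip_eq]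

lemma openStrip_subset_closedStrip : openStrip ⊆ closedStrip := fun _ hz => ⟨hz.1.le, hz.2.le⟩

lemma exists_bound_on_closedStrip {E : Type*} [NormedAddCommGroup E] {f : ℂ → E}
    (hf : ContinuousOn f closedStrip) {R C : ℝ}
    (hR : ∀ z ∈ closedStrip, R ≤ |z.re| → ‖f z‖ ≤ C) :
    ∃ M, ∀ z ∈ closedStrip, ‖f z‖ ≤ M := by
  have hK : IsCompact (Icc (-R) R ×ℂ Icc 0 1) := isCompact_Icc.reProdIm isCompact_Icc
  obtain ⟨M, hM⟩ := hK.exists_bound_of_continuousOn (hf.mono fun z hz => hz.2)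
  refine ⟨max M C, fun z hz => ?_⟩
  rcases le_or_gt R |z.re| with hle | hlt
  · exact (hR z hz hle).trans (le_max_right _ _)
  · exact (hM z ⟨abs_le.mp hlt.le, hz⟩).trans (le_max_left _ _)

lemma DiffContOnCl.mul_cexp_const_mul {s : Set ℂ} {f : ℂ → ℂ} (hf : DiffContOnCl ℂ f s)
    (a : ℂ) : DiffContOnCl ℂ (fun z => f z * cexp (a * z)) s :=
  hf.smul (by fun_prop : Differentiable ℂ fun z : ℂ => cexp (a * z)).diffContOnCl

lemma re_nonpos_of_horizontal_strip {a b c B : ℝ} {g : ℂ → ℂ}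
    (hd : DiffContOnCl ℂ g (im ⁻¹' Ioo a b)) (hc : c < π / (b - a))
    (hB : ∀ z ∈ im ⁻¹' Ioo a b, ‖g z‖ ≤ B * Real.exp (c * |z.re|))
    (ha : ∀ z : ℂ, z.im = a → (g z).re ≤ 0) (hb : ∀ z : ℂ, z.im = b → (g z).re ≤ 0)
    {z : ℂ} (hza : a ≤ z.im) (hzb : z.im ≤ b) : (g z).re ≤ 0 := by
  have hexp : ∀ w, ‖cexp (g w)‖ = Real.exp (g w).re := fun w => norm_exp (g w)
  suffices ‖cexp (g z)‖ ≤ 1 by rwa [hexp, Real.exp_le_one_iff] at this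
  refine PhragmenLindelof.horizontal_strip (f := fun w => cexp (g w))
    (Complex.differentiable_exp.comp_diffContOnCl hd) ⟨c, hc, B, ?_⟩
    (fun w hw => (hexp w).trans_le (Real.exp_le_one_iff.mpr (ha w hw)))
    (fun w hw => (hexp w).trans_le (Real.exp_le_one_iff.mpr (hb w hw))) hza hzb
  refine Asymptotics.IsBigO.of_bound 1 (eventually_inf_principal.mpr (.of_forall fun w hw => ?_))
  rw [one_mul, Real.norm_of_nonneg (Real.exp_pos _).le, hexp, Real.exp_le_exp]
  exact (re_le_norm _).trans (hB w hw)

lemma im_eq_zero_of_horizontal_strip {a b c B : ℝ} {g : ℂ → ℂ}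
    (hd : DiffContOnCl ℂ g (im ⁻¹' Ioo a b)) (hc : c < π / (b - a))
    (hB : ∀ z ∈ im ⁻¹' Ioo a b, ‖g z‖ ≤ B * Real.exp (c * |z.re|))
    (ha : ∀ z : ℂ, z.im = a → (g z).im = 0) (hb : ∀ z : ℂ, z.im = b → (g z).im = 0)
    {z : ℂ} (hza : a ≤ z.im) (hzb : z.im ≤ b) : (g z).im = 0 := by
  have re_rotate_nonpos : ∀ u : ℂ, ‖u‖ = 1 → u.re = 0 → (u * g z).re ≤ 0 := by
    intro u hu hre
    refine re_nonpos_of_horizontal_strip (B := B) (hd.const_smul u) hc (fun w hw => ?_)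
      (fun w hw => ?_) (fun w hw => ?_) hza hzb
    · simpa [norm_mul, hu] using hB w hw
    · simp [mul_re, hre, ha w hw]
    · simp [mul_re, hre, hb w hw]
  have h₁ := re_rotate_nonpos I (by simp) (by simp)
  have h₂ := re_rotate_nonpos (-I) (by simp) (by simp)
  simp only [mul_re, I_re, I_im, neg_re, neg_im] at h₁ h₂
  linarith

lemma norm_cexp_neg_ofReal_mul (θ : ℝ) (z : ℂ) : ‖cexp (-θ * z)‖ = Real.exp (-(θ * z.re)) := by
  simp [norm_exp]

lemma im_mul_cexp_neg_ofReal_mul_ofReal {w : ℂ} (hw : w.im = 0) (θ s : ℝ) :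
    (w * cexp (-θ * s)).im = 0 := by
  rw [← ofReal_neg, ← ofReal_mul, ← ofReal_exp, im_mul_ofReal, hw, zero_mul]

lemma im_ofReal_mul_cexp_mul_cexp_neg_mul_add_I (r θ s : ℝ) :
    (r * cexp (θ * I) * cexp (-θ * (s + I))).im = 0 := by
  rw [mul_assoc, ← Complex.exp_add,
    show (θ : ℂ) * I + -θ * (s + I) = ↑(-(θ * s)) by push_cast; ring,
    ← ofReal_exp, ← ofReal_mul, ofReal_im]

lemma im_mul_cexp_neg_mul_eq_zero_on_closedStrip {θ M : ℝ} (hθ : |θ| < π) {ζ : ℂ → ℂ}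
    (hd : DiffContOnCl ℂ ζ openStrip) (hM : ∀ z ∈ closedStrip, ‖ζ z‖ ≤ M)
    (hb0 : ∀ s : ℝ, (ζ (s : ℂ)).im = 0)
    (hb1 : ∀ s : ℝ, ∃ r : ℝ, ζ (s + I) = (r : ℂ) * cexp (θ * I)) :
    ∀ z ∈ closedStrip, (ζ z * cexp (-θ * z)).im = 0 := by
  refine fun z hz => im_eq_zero_of_horizontal_strip (a := 0) (b := 1) (c := |θ|) (B := M)
    (hd.mul_cexp_const_mul (-θ)) (by simpa using hθ) (fun w hw => ?_) (fun w hw => ?_)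
    (fun w hw => ?_) hz.1 hz.2
  · have hζw := hM w (openStrip_subset_closedStrip hw)
    rw [norm_mul, norm_cexp_neg_ofReal_mul]
    gcongr
    · exact (norm_nonneg _).trans hζw
    · rw [← abs_mul]; exact neg_le_abs _
  · rw [← re_add_im w, hw, ofReal_zero, zero_mul, add_zero]
    exact im_mul_cexp_neg_ofReal_mul_ofReal (hb0 _) θ w.re
  · obtain ⟨r, hr⟩ := hb1 w.re
    rw [← re_add_im w, hw, ofReal_one, one_mul, hr]
    exact im_ofReal_mul_cexp_mul_cexp_neg_mul_add_I r θ w.re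

lemma eq_zero_of_mul_cexp_neg_mul_eqOn_openStrip {θ : ℝ} (hθ : 0 ≤ θ) {ζ : ℂ → ℂ} {c : ℂ}
    (hc : ∀ z ∈ openStrip, ζ z * cexp (-θ * z) = c)
    (hdecay : ∀ ε > 0, ∃ R, ∀ z ∈ closedStrip, R ≤ |z.re| → ‖ζ z‖ ≤ ε) : c = 0 := by
  refine norm_le_zero_iff.mp (le_of_forall_gt_imp_ge_of_dense fun ε hε => ?_)
  obtain ⟨R, hR⟩ := hdecay ε hε
  set z : ℂ := max R 0 + 2⁻¹ * I
  have hz : z ∈ openStrip := by simp [z, openStrip]; norm_num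
  rw [← hc z hz, norm_mul, norm_cexp_neg_ofReal_mul]
  calc ‖ζ z‖ * Real.exp (-(θ * z.re)) ≤ ε * 1 := by
        gcongr
        · exact hR z (openStrip_subset_closedStrip hz)
            (by simpa [z] using le_abs.mpr (.inl (le_max_left R 0)))
        · simp [z]; positivity
    _ = ε := mul_one ε

/-- Linearized transversality at a transverse Lagrangian double point: a holomorphic function
on the strip, continuous up to the boundary, taking values in `ℝ` on `{t = 0}` and in
`ℝ·e^{iθ}` (with `0 < θ < π`) on `{t = 1}`, and decaying to `0` uniformly as `s → ±∞`,
vanishes identically. -/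
theorem holomorphic_strip_rotated_boundary_vanishes
    (θ : ℝ) (hθ0 : 0 < θ) (hθπ : θ < π)
    (ζ : ℂ → ℂ)
    (hcont : ContinuousOn ζ closedStrip)
    (hhol : DifferentiableOn ℂ ζ openStrip)
    (hb0 : ∀ s : ℝ, (ζ (s : ℂ)).im = 0)
    (hb1 : ∀ s : ℝ, ∃ r : ℝ, ζ (s + Complex.I) = (r : ℂ) * Complex.exp (θ * Complex.I))
    (hdecay : ∀ ε : ℝ, 0 < ε → ∃ R : ℝ, ∀ s t : ℝ, R ≤ |s| → 0 ≤ t → t ≤ 1 →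
      ‖ζ (s + t * Complex.I)‖ ≤ ε) :
    ∀ z ∈ closedStrip, ζ z = 0 := by
  have hdecay_re : ∀ ε > 0, ∃ R, ∀ z ∈ closedStrip, R ≤ |z.re| → ‖ζ z‖ ≤ ε := fun ε hε => by
    obtain ⟨R, hR⟩ := hdecay ε hε
    exact ⟨R, fun z hz hzR => re_add_im z ▸ hR z.re z.im hzR hz.1 hz.2⟩
  have hd : DiffContOnCl ℂ ζ openStrip := ⟨hhol, closure_openStrip ▸ hcont⟩
  have hd_mul := hd.mul_cexp_const_mul (-θ)
  obtain ⟨R, hR⟩ := hdecay_re 1 one_pos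
  obtain ⟨M, hM⟩ := exists_bound_on_closedStrip hcont hR
  have him := im_mul_cexp_neg_mul_eq_zero_on_closedStrip (abs_lt.mpr ⟨by linarith, hθπ⟩) hd hM
    hb0 hb1
  obtain ⟨c, hc⟩ :=
    (hd_mul.differentiableOn.analyticOnNhd isOpen_openStrip).eq_const_of_im_eq_const
      (fun z hz => him z (openStrip_subset_closedStrip hz)) isOpen_openStrip isConnected_openStrip
  have hc0 : c = 0 := eq_zero_of_mul_cexp_neg_mul_eqOn_openStrip hθ0.le hc hdecay_re
  have h0 : EqOn (fun z => ζ z * cexp (-θ * z)) 0 closedStrip :=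
    EqOn.of_subset_closure (fun z hz => (hc z hz).trans hc0)
      (closure_openStrip ▸ hd_mul.continuousOn) continuousOn_const
      openStrip_subset_closedStrip closure_openStrip.ge
  intro z hz
  simpa [Complex.exp_ne_zero] using h0 hz
end
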